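/- arXiv:1405.2486 — 6 statements merged into one kernel-verified Lean document; each statement's English description precedes it below -/
import Mathlib

section
/- For every finite undirected simple graph G=(V,E) with tie-breaking such that each vertex's closed/open neighborhood has odd size, and any initial opinions x_i(0) ∈ {-1,+1}, the synchronous majority dynamics x_i(t+1) = sgn(Σ_{j∈N(i)} x_j(t)) satisfies: for every vertex i there exists T such that x_i(t+2) = x_i(t) for all t ≥ T. -/
section GolesOlivosAux

private lemma go_sign_mul_self (a : ℤ) : a.sign * a = |a| := by
  rcases lt_trichotomy a 0 with h | h | h
  · rw [Int.sign_eq_neg_one_iff_neg.mpr h, abs_of_neg h]; ring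
  · simp [h]
  · rw [Int.sign_eq_one_iff_pos.mpr h, abs_of_pos h]; ring

end GolesOlivosAux

/-- **Goles–Olivos period-two property.**
For every finite simple graph `G` with tie-breaking neighborhoods `N`
(each `N i` agrees with the graph neighborhood off the diagonal and has odd
cardinality, i.e. `i` is added to or removed from its own neighborhood so that
`|N i|` is odd), and any `±1` initial opinions, the synchronous majority
dynamics `x (t+1) i = sgn (∑_{j ∈ N i} x t j)` is eventually `2`-periodic at
every vertex. -/
theorem goles_olivos_period_two
    {V : Type*} [Fintype V] (G : SimpleGraph V) [DecidableRel G.Adj]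
    (N : V → Finset V)
    (hN : ∀ i j : V, i ≠ j → (j ∈ N i ↔ G.Adj i j))
    (hodd : ∀ i : V, Odd (N i).card)
    (x : ℕ → V → ℤ)
    (hx0 : ∀ i : V, x 0 i = 1 ∨ x 0 i = -1)
    (hdyn : ∀ (t : ℕ) (i : V), x (t + 1) i = Int.sign (∑ j ∈ N i, x t j)) :
    ∀ i : V, ∃ T : ℕ, ∀ t ≥ T, x (t + 2) i = x t i := by
  classical
  set S : ℕ → V → ℤ := fun t i => ∑ j ∈ N i, x t j with hS
  -- all opinions are ±1, and the local fields S t i are nonzero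
  have hpm : ∀ t i, x t i = 1 ∨ x t i = -1 := by
    intro t
    induction t with
    | zero => exact hx0
    | succ t ih =>
      intro i
      have hne : S t i ≠ 0 := by
        intro h0
        have hc : ((S t i : ℤ) : ZMod 2) = ((N i).card : ZMod 2) := by
          rw [hS]
          push_cast
          rw [Finset.sum_congr rfl (fun j _ => ?_), Finset.sum_const, nsmul_eq_mul, mul_one]
          rcases ih j with h | h <;> rw [h] <;> decide
        rcases hodd i with ⟨k, hk⟩
        rw [h0, hk] at hc
        push_cast at hc
        have h2 : (2 : ZMod 2) = 0 := rfl
        rw [h2, zero_mul, zero_add] at hc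
        exact zero_ne_one hc
      rw [hdyn t i]
      rcases lt_trichotomy (S t i) 0 with h | h | h
      · right; exact Int.sign_eq_neg_one_iff_neg.mpr h
      · exact absurd h hne
      · left; exact Int.sign_eq_one_iff_pos.mpr h
  have hne : ∀ t i, S t i ≠ 0 := by
    intro t i h0
    have hc : ((S t i : ℤ) : ZMod 2) = ((N i).card : ZMod 2) := by
      rw [hS]
      push_cast
      rw [Finset.sum_congr rfl (fun j _ => ?_), Finset.sum_const, nsmul_eq_mul, mul_one]
      rcases hpm t j with h | h <;> rw [h] <;> decide
    rcases hodd i with ⟨k, hk⟩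
    rw [h0, hk] at hc
    push_cast at hc
    have h2 : (2 : ZMod 2) = 0 := rfl
    rw [h2, zero_mul, zero_add] at hc
    exact zero_ne_one hc
  -- symmetry of the neighborhood relation
  have hsym : ∀ i j : V, j ∈ N i ↔ i ∈ N j := by
    intro i j
    by_cases h : i = j
    · subst h; rfl
    · rw [hN i j h, hN j i (Ne.symm h), G.adj_comm]
  -- swap lemma
  have hswap : ∀ a b : V → ℤ,
      ∑ i, a i * ∑ j ∈ N i, b j = ∑ i, b i * ∑ j ∈ N i, a j := by
    intro a b
    have h1 : ∀ (c d : V → ℤ) (i : V), c i * ∑ j ∈ N i, d j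
        = ∑ j, if j ∈ N i then c i * d j else 0 := by
      intro c d i
      rw [Finset.mul_sum, ← Finset.sum_filter]
      congr 1
      ext j
      simp [Finset.mem_filter]
    calc ∑ i, a i * ∑ j ∈ N i, b j
        = ∑ i, ∑ j, if j ∈ N i then a i * b j else 0 := by
          exact Finset.sum_congr rfl fun i _ => h1 a b i
      _ = ∑ j, ∑ i, if j ∈ N i then a i * b j else 0 := Finset.sum_comm
      _ = ∑ j, ∑ i, if i ∈ N j then b j * a i else 0 := by
          refine Finset.sum_congr rfl fun j _ => Finset.sum_congr rfl fun i _ => ?_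
          by_cases h : j ∈ N i
          · simp [h, (hsym i j).mp h, mul_comm]
          · have h' : i ∉ N j := fun hh => h ((hsym i j).mpr hh)
            simp [h, h']
      _ = ∑ j, b j * ∑ i ∈ N j, a i := by
          exact Finset.sum_congr rfl fun j _ => (h1 b a j).symm
  -- the energy
  set E : ℕ → ℤ := fun t => ∑ i, x (t + 1) i * S t i with hE
  have hEalt : ∀ t, E t = ∑ i, x t i * S (t + 1) i := by
    intro t
    exact hswap (fun i => x (t + 1) i) (fun j => x t j)
  -- termwise comparison
  have hterm : ∀ t i, x t i * S (t + 1) i ≤ x (t + 2) i * S (t + 1) i := by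
    intro t i
    have h2 : x (t + 2) i * S (t + 1) i = |S (t + 1) i| := by
      rw [hdyn (t + 1) i]; exact go_sign_mul_self _
    rw [h2]
    rcases hpm t i with h | h <;> rw [h]
    · rw [one_mul]; exact le_abs_self _
    · rw [neg_one_mul]; exact neg_le_abs _
  have hmono : ∀ t, E t ≤ E (t + 1) := by
    intro t
    rw [hEalt t, hE]
    exact Finset.sum_le_sum fun i _ => hterm t i
  -- bound on E
  have hbound : ∀ t, E t ≤ ∑ i, ((N i).card : ℤ) := by
    intro t
    rw [hE]
    refine Finset.sum_le_sum fun i _ => ?_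
    have h1 : |x (t + 1) i * S t i| ≤ ((N i).card : ℤ) := by
      rw [abs_mul]
      have hx1 : |x (t + 1) i| = 1 := by
        rcases hpm (t + 1) i with h | h <;> rw [h] <;> decide
      rw [hx1, one_mul, hS]
      calc |∑ j ∈ N i, x t j| ≤ ∑ j ∈ N i, |x t j| := Finset.abs_sum_le_sum_abs _ _
        _ = ∑ j ∈ N i, 1 := Finset.sum_congr rfl fun j _ => by
            rcases hpm t j with h | h <;> rw [h] <;> decide
        _ = ((N i).card : ℤ) := by simp
    exact le_trans (le_abs_self _) h1
  set B : ℤ := ∑ i, ((N i).card : ℤ) with hB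
  -- the Lyapunov function f t = (B - E t).toNat is antitone, hence eventually constant
  set f : ℕ → ℕ := fun t => (B - E t).toNat with hf
  have hEmono : ∀ t s, s ≤ t → E s ≤ E t := by
    intro t
    induction t with
    | zero => intro s hs; rw [Nat.le_zero.mp hs]
    | succ t ih =>
      intro s hs
      rcases Nat.lt_or_ge s (t + 1) with h | h
      · exact le_trans (ih s (Nat.lt_succ_iff.mp h)) (hmono t)
      · rw [le_antisymm hs h]
  have hfmono : ∀ s t, s ≤ t → f t ≤ f s := by
    intro s t hst
    have hEst : E s ≤ E t := hEmono t s hst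
    exact Int.toNat_le_toNat (by omega)
  have hex : ∃ m : ℕ, ∃ t : ℕ, f t = m := ⟨f 0, 0, rfl⟩
  obtain ⟨t0, ht0⟩ := Nat.find_spec hex
  have hconst : ∀ t ≥ t0, f t = Nat.find hex := by
    intro t ht
    have h1 : f t ≤ Nat.find hex := ht0 ▸ hfmono t0 t ht
    have h2 : Nat.find hex ≤ f t := Nat.find_min' hex ⟨t, rfl⟩
    omega
  have hEconst : ∀ t ≥ t0, E (t + 1) = E t := by
    intro t ht
    have h1 : f t = f (t + 1) := by
      rw [hconst t ht, hconst (t + 1) (le_trans ht (Nat.le_succ t))]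
    have h2 : (0 : ℤ) ≤ B - E t := by have := hbound t; omega
    have h3 : (0 : ℤ) ≤ B - E (t + 1) := by have := hbound (t + 1); omega
    rw [hf] at h1
    simp only at h1
    omega
  -- conclude: equality of energies forces period two everywhere
  intro i
  refine ⟨t0, fun t ht => ?_⟩
  have heq : E (t + 1) = E t := hEconst t ht
  rw [hEalt t, hE] at heq
  have hzero : ∑ j, (x (t + 2) j * S (t + 1) j - x t j * S (t + 1) j) = 0 := by
    have : ∑ j, x (t + 2) j * S (t + 1) j = ∑ j, x t j * S (t + 1) j := heq
    rw [Finset.sum_sub_distrib, this, sub_self]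
  have hterm0 : x (t + 2) i * S (t + 1) i - x t i * S (t + 1) i = 0 := by
    have := (Finset.sum_eq_zero_iff_of_nonneg
      (fun j _ => sub_nonneg.mpr (hterm t j))).mp hzero i (Finset.mem_univ i)
    exact this
  have : x (t + 2) i * S (t + 1) i = x t i * S (t + 1) i := by omega
  exact mul_right_cancel₀ (hne (t + 1) i) this
end

section
/- In weighted majority dynamics on a finite graph with weights satisfying the (ε,W)-regularity conditions — namely Σ_{i∈V} Σ_{j∈N(i)} w(i,j) ≤ W·|V|, and |Σ_{j∈N(i)} w(i,j) y_j| ≥ ε for every vertex i and every assignment y ∈ {-1,+1}^{N(i)} — the total number of 'flips', Σ_{i∈V} #{t : x_i(t+2) ≠ x_i(t)}, is at most (2W/ε)·|V|. -/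
/-- **Flip-count bound for `(ε,W)`-regular weighted majority dynamics.**
If the symmetric positive weights satisfy `∑_i ∑_{j ∈ N i} w i j ≤ W * |V|`
and `|∑_{j ∈ N i} w i j * y j| ≥ ε` for every vertex `i` and every sign
assignment `y : V → {-1,+1}`, then the total number of "flips"
`∑_i #{t : x (t+2) i ≠ x t i}` is at most `(2W/ε) * |V|`
(stated as a bound on flips up to any finite horizon `T`). -/
theorem weighted_majority_flip_count
    {V : Type*} [Fintype V] [DecidableEq V]
    (N : V → Finset V) (hNsymm : ∀ i j : V, j ∈ N i ↔ i ∈ N j)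
    (w : V → V → ℝ) (hwsymm : ∀ i j : V, w i j = w j i)
    (hwpos : ∀ i : V, ∀ j ∈ N i, 0 < w i j)
    (ε W : ℝ) (hε : 0 < ε)
    (hW : (∑ i : V, ∑ j ∈ N i, w i j) ≤ W * (Fintype.card V))
    (hreg : ∀ (i : V) (y : V → ℝ), (∀ j : V, y j = 1 ∨ y j = -1) →
      ε ≤ |∑ j ∈ N i, w i j * y j|)
    (x : ℕ → V → ℝ)
    (hx0 : ∀ i : V, x 0 i = 1 ∨ x 0 i = -1)
    (hdyn : ∀ (t : ℕ) (i : V),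
      x (t + 1) i = Real.sign (∑ j ∈ N i, w i j * x t j)) :
    ∀ T : ℕ,
      (∑ i : V,
        ((Finset.range T).filter (fun t => x (t + 2) i ≠ x t i)).card : ℝ)
        ≤ (2 * W / ε) * (Fintype.card V) := by
  classical
  intro T
  -- all states are ±1
  have hsgn : ∀ t i, x t i = 1 ∨ x t i = -1 := by
    intro t
    induction t with
    | zero => exact hx0
    | succ t ih =>
      intro i
      have h := hreg i (x t) ih
      rw [hdyn]
      rcases lt_trichotomy (∑ j ∈ N i, w i j * x t j) 0 with h0 | h0 | h0
      · right; exact Real.sign_of_neg h0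
      · exfalso; rw [h0] at h; simp at h; linarith
      · left; exact Real.sign_of_pos h0
  set S : ℕ → V → ℝ := fun t i => ∑ j ∈ N i, w i j * x t j with hSdef
  set L : ℕ → ℝ := fun t => ∑ i : V, x (t + 1) i * S t i with hLdef
  have habs : ∀ t i, |x t i| = 1 := by
    intro t i; rcases hsgn t i with h | h <;> simp [h]
  have hSeps : ∀ t i, ε ≤ |S t i| := fun t i => hreg i (x t) (hsgn t)
  -- rewrite L using symmetry
  have hLswap : ∀ t, L t = ∑ i : V, x t i * S (t + 1) i := by
    intro t
    simp only [hLdef, hSdef, Finset.mul_sum]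
    rw [Finset.sum_comm' (s' := fun j => N j) (t' := Finset.univ)
      (fun i j => by simp [hNsymm i j])]
    refine Finset.sum_congr rfl fun j _ => Finset.sum_congr rfl fun i hi => ?_
    rw [hwsymm i j]; ring
  -- one-step energy increase
  have hstep : ∀ t, L (t + 1) = L t + ∑ i : V, (x (t + 2) i - x t i) * S (t + 1) i := by
    intro t
    rw [hLswap t]
    simp only [hLdef]
    rw [← Finset.sum_add_distrib]
    refine Finset.sum_congr rfl fun i _ => ?_
    ring
  -- pointwise lower bound for each term
  have hterm : ∀ t i,
      (if x (t + 2) i ≠ x t i then 2 * ε else 0) ≤ (x (t + 2) i - x t i) * S (t + 1) i := by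
    intro t i
    have hx2 : x (t + 2) i = Real.sign (S (t + 1) i) := hdyn (t + 1) i
    have heps := hSeps (t + 1) i
    rcases lt_trichotomy (S (t + 1) i) 0 with h0 | h0 | h0
    · have hs : x (t + 2) i = -1 := by rw [hx2, Real.sign_of_neg h0]
      have hS : S (t + 1) i ≤ -ε := by
        rw [abs_of_neg h0] at heps; linarith
      rcases hsgn t i with h | h
      · rw [if_pos (by rw [hs, h]; norm_num), hs, h]; nlinarith
      · rw [if_neg (by rw [hs, h]; simp), hs, h]; norm_num
    · exfalso; rw [h0] at heps; simp at heps; linarith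
    · have hs : x (t + 2) i = 1 := by rw [hx2, Real.sign_of_pos h0]
      have hS : ε ≤ S (t + 1) i := by rw [abs_of_pos h0] at heps; exact heps
      rcases hsgn t i with h | h
      · rw [if_neg (by rw [hs, h]; simp), hs, h]; norm_num
      · rw [if_pos (by rw [hs, h]; norm_num), hs, h]; nlinarith
  -- telescoping
  have htel : L T = L 0 + ∑ t ∈ Finset.range T, ∑ i : V, (x (t + 2) i - x t i) * S (t + 1) i := by
    induction T with
    | zero => simp
    | succ T ih => rw [Finset.sum_range_succ, hstep T, ih]; ring
  -- bound on |L t|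
  have hLbound : ∀ t, |L t| ≤ ∑ i : V, ∑ j ∈ N i, w i j := by
    intro t
    calc |L t| ≤ ∑ i : V, |x (t + 1) i * S t i| := Finset.abs_sum_le_sum_abs _ _
      _ ≤ ∑ i : V, ∑ j ∈ N i, w i j := by
          refine Finset.sum_le_sum fun i _ => ?_
          rw [abs_mul, habs, one_mul]
          calc |S t i| ≤ ∑ j ∈ N i, |w i j * x t j| := Finset.abs_sum_le_sum_abs _ _
            _ = ∑ j ∈ N i, w i j := by
                refine Finset.sum_congr rfl fun j hj => ?_
                rw [abs_mul, habs, mul_one, abs_of_pos (hwpos i j hj)]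
  have hwsum : 0 ≤ ∑ i : V, ∑ j ∈ N i, w i j :=
    Finset.sum_nonneg fun i _ => Finset.sum_nonneg fun j hj => (hwpos i j hj).le
  have hWn : 0 ≤ W * (Fintype.card V) := le_trans hwsum hW
  -- sum of flips bound
  have hflip : ∀ i : V,
      2 * ε * (((Finset.range T).filter (fun t => x (t + 2) i ≠ x t i)).card : ℝ)
        = ∑ t ∈ Finset.range T, (if x (t + 2) i ≠ x t i then 2 * ε else 0) := by
    intro i
    rw [← Finset.sum_filter, Finset.sum_const, nsmul_eq_mul]; ring
  have hmain : 2 * ε * (∑ i : V,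
      (((Finset.range T).filter (fun t => x (t + 2) i ≠ x t i)).card : ℝ))
        ≤ 2 * (W * (Fintype.card V)) := by
    have h1 : ∑ i : V, 2 * ε *
        (((Finset.range T).filter (fun t => x (t + 2) i ≠ x t i)).card : ℝ)
          ≤ ∑ t ∈ Finset.range T, ∑ i : V, (x (t + 2) i - x t i) * S (t + 1) i := by
      rw [Finset.sum_comm (f := fun t i => (x (t + 2) i - x t i) * S (t + 1) i)]
      refine Finset.sum_le_sum fun i _ => ?_
      rw [hflip i]
      exact Finset.sum_le_sum fun t _ => hterm t i
    have h2 := htel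
    have h3 := hLbound T
    have h4 := hLbound 0
    have h5 : ∑ i : V, ∑ j ∈ N i, w i j ≤ W * (Fintype.card V) := hW
    rw [Finset.mul_sum]
    have h6 := abs_le.mp h3
    have h7 := abs_le.mp h4
    linarith [h1]
  -- conclude
  calc (∑ i : V, (((Finset.range T).filter (fun t => x (t + 2) i ≠ x t i)).card : ℝ))
      ≤ W * (Fintype.card V) / ε := by
        rw [le_div_iff₀ hε]; nlinarith [hmain]
    _ ≤ 2 * (W * (Fintype.card V)) / ε := by rw [div_le_div_iff₀ hε hε]; nlinarith
    _ = 2 * W / ε * (Fintype.card V) := by ring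
end

section
/- In (unweighted) majority dynamics on a finite graph of maximum degree d where every neighborhood |N(i)| is odd, the number of times t with x_i(t+2) ≠ x_i(t), averaged over all vertices i, is at most 2d. -/
open Finset

private lemma odd_sum_pm {V : Type*} (s : Finset V) (hs : Odd s.card)
    (y : V → ℤ) (hy : ∀ j ∈ s, y j = 1 ∨ y j = -1) :
    Odd (∑ j ∈ s, y j) := by
  have he : Even (∑ j ∈ s, (y j - 1)) := by
    apply Finset.even_sum
    intro j hj
    rcases hy j hj with h | h <;> simp [h]
  have hsum : ∑ j ∈ s, (y j - 1) = (∑ j ∈ s, y j) - s.card := by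
    rw [Finset.sum_sub_distrib]; simp
  rw [hsum] at he
  have hodd : Odd ((s.card : ℤ)) := by exact_mod_cast hs
  have := he.add_odd hodd
  simpa using this

private lemma sum_comm_N {V : Type*} [Fintype V] [DecidableEq V]
    (N : V → Finset V) (hsym : ∀ i j, j ∈ N i ↔ i ∈ N j)
    (a b : V → ℤ) :
    ∑ i : V, a i * ∑ j ∈ N i, b j = ∑ i : V, b i * ∑ j ∈ N i, a j := by
  have h1 : ∀ (a b : V → ℤ), ∑ i : V, a i * ∑ j ∈ N i, b j
      = ∑ i : V, ∑ j : V, if j ∈ N i then a i * b j else 0 := by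
    intro a b
    refine Finset.sum_congr rfl fun i _ => ?_
    rw [Finset.mul_sum, ← Finset.sum_filter]
    · congr 1
      ext j
      simp [Finset.mem_filter]
  rw [h1, h1, Finset.sum_comm]
  refine Finset.sum_congr rfl fun i _ => Finset.sum_congr rfl fun j _ => ?_
  by_cases h : j ∈ N i
  · simp [h, (hsym i j).mp h, mul_comm]
  · simp [h, show i ∉ N j from fun hi => h ((hsym j i).mp hi)]

/-- **Average flip-count bound for unweighted majority dynamics.**
On a finite simple graph of maximum degree `d` whose tie-adjusted
neighborhoods `N i` all have odd cardinality, the number of times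
`t` with `x (t+2) i ≠ x t i`, averaged over all vertices `i`, is at most `2d`
(stated as a bound on flips up to any finite horizon `T`). -/
theorem majority_flip_count_average
    {V : Type*} [Fintype V] [DecidableEq V] [Nonempty V]
    (G : SimpleGraph V) [DecidableRel G.Adj]
    (d : ℕ) (hdeg : ∀ i : V, G.degree i ≤ d)
    (N : V → Finset V)
    (hN : ∀ i j : V, i ≠ j → (j ∈ N i ↔ G.Adj i j))
    (hodd : ∀ i : V, Odd (N i).card)
    (x : ℕ → V → ℤ)
    (hx0 : ∀ i : V, x 0 i = 1 ∨ x 0 i = -1)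
    (hdyn : ∀ (t : ℕ) (i : V), x (t + 1) i = Int.sign (∑ j ∈ N i, x t j)) :
    ∀ T : ℕ,
      ((∑ i : V,
          ((Finset.range T).filter (fun t => x (t + 2) i ≠ x t i)).card : ℝ)
        / (Fintype.card V)) ≤ 2 * d := by
  intro T
  classical
  set n := Fintype.card V with hn
  -- all values are ±1
  have hpm : ∀ t i, x t i = 1 ∨ x t i = -1 := by
    intro t
    induction t with
    | zero => exact hx0
    | succ t ih =>
      intro i
      have hoddS : Odd (∑ j ∈ N i, x t j) :=
        odd_sum_pm (N i) (hodd i) _ (fun j _ => ih j)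
      have hne : (∑ j ∈ N i, x t j) ≠ 0 := by
        intro h; rw [h] at hoddS; exact (Int.not_odd_iff_even.mpr Even.zero) hoddS
      rw [hdyn t i]
      rcases lt_or_gt_of_ne hne with h | h
      · right; exact Int.sign_eq_neg_one_iff_neg.mpr h
      · left; exact Int.sign_eq_one_iff_pos.mpr h
  have hoddS : ∀ t i, Odd (∑ j ∈ N i, x t j) := fun t i =>
    odd_sum_pm (N i) (hodd i) _ (fun j _ => hpm t j)
  have hSne : ∀ t i, (∑ j ∈ N i, x t j) ≠ 0 := by
    intro t i h
    have := hoddS t i; rw [h] at this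
    exact (Int.not_odd_iff_even.mpr Even.zero) this
  -- symmetry of N
  have hsym : ∀ i j, j ∈ N i ↔ i ∈ N j := by
    intro i j
    by_cases h : i = j
    · subst h; rfl
    · rw [hN i j h, hN j i (fun e => h e.symm), G.adj_comm]
  -- neighborhood cards
  have hcard : ∀ i, (N i).card ≤ d + 1 := by
    intro i
    have hsub : N i ⊆ insert i (G.neighborFinset i) := by
      intro j hj
      by_cases h : j = i
      · simp [h]
      · have : G.Adj i j := (hN i j (fun e => h e.symm)).mp hj
        simp [SimpleGraph.mem_neighborFinset, this]
    calc (N i).card ≤ (insert i (G.neighborFinset i)).card := Finset.card_le_card hsub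
      _ ≤ (G.neighborFinset i).card + 1 := Finset.card_insert_le _ _
      _ ≤ d + 1 := by
          have := hdeg i
          rw [SimpleGraph.degree] at this
          omega
  -- energy
  set E : ℕ → ℤ := fun t => ∑ i : V, x (t+1) i * ∑ j ∈ N i, x t j with hE
  have hEbound : ∀ t, |E t| ≤ n * (d + 1) := by
    intro t
    calc |E t| ≤ ∑ i : V, |x (t+1) i * ∑ j ∈ N i, x t j| := Finset.abs_sum_le_sum_abs _ _
      _ ≤ ∑ _i : V, ((d : ℤ) + 1) := by
          apply Finset.sum_le_sum
          intro i _
          rw [abs_mul]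
          have h1 : |x (t+1) i| = 1 := by rcases hpm (t+1) i with h | h <;> simp [h]
          rw [h1, one_mul]
          calc |∑ j ∈ N i, x t j| ≤ ∑ j ∈ N i, |x t j| := Finset.abs_sum_le_sum_abs _ _
            _ = (N i).card := by
                have habs1 : ∀ j ∈ N i, |x t j| = (1:ℤ) := fun j _ => by
                  rcases hpm t j with h | h <;> simp [h]
                rw [Finset.sum_congr rfl habs1]
                simp
            _ ≤ (d : ℤ) + 1 := by exact_mod_cast hcard i
      _ = n * (d + 1) := by rw [Finset.sum_const, Finset.card_univ]; push_cast [hn]; ring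
  have hswap : ∀ t, E t = ∑ i : V, x t i * ∑ j ∈ N i, x (t+1) j := by
    intro t
    exact sum_comm_N N hsym (x (t+1)) (x t)
  have hstep : ∀ t, E (t+1) - E t
      = ∑ i : V, (x (t+2) i - x t i) * ∑ j ∈ N i, x (t+1) j := by
    intro t
    rw [hswap t]
    show (∑ i : V, x (t+2) i * ∑ j ∈ N i, x (t+1) j) - _ = _
    rw [← Finset.sum_sub_distrib]
    exact Finset.sum_congr rfl fun i _ => by ring
  have hterm : ∀ t i, (if x (t+2) i ≠ x t i then (2:ℤ) else 0)
      ≤ (x (t+2) i - x t i) * ∑ j ∈ N i, x (t+1) j := by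
    intro t i
    by_cases h : x (t+2) i = x t i
    · simp [h]
    · simp only [h, ne_eq, not_false_iff, if_true]
      have h2 : x (t+2) i = Int.sign (∑ j ∈ N i, x (t+1) j) := hdyn (t+1) i
      have hxt : x t i = - x (t+2) i := by
        rcases hpm (t+2) i with h1 | h1 <;> rcases hpm t i with h3 | h3 <;>
          simp [h1, h3] at h ⊢
      rw [hxt]
      have hne := hSne (t+1) i
      rcases lt_or_gt_of_ne hne with hs | hs
      · rw [h2, Int.sign_eq_neg_one_iff_neg.mpr hs]
        nlinarith
      · rw [h2, Int.sign_eq_one_iff_pos.mpr hs]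
        nlinarith
  -- main integer bound
  have hflipZ : (2:ℤ) * ∑ i : V,
      (((Finset.range T).filter (fun t => x (t + 2) i ≠ x t i)).card : ℤ)
      ≤ 2 * (n * (d + 1)) := by
    have hcards : ∀ i : V,
        (((Finset.range T).filter (fun t => x (t + 2) i ≠ x t i)).card : ℤ)
        = ∑ t ∈ Finset.range T, (if x (t+2) i ≠ x t i then (1:ℤ) else 0) := by
      intro i
      rw [Finset.card_filter]
      push_cast
      exact Finset.sum_congr rfl fun t _ => by split <;> simp
    calc (2:ℤ) * ∑ i : V, (((Finset.range T).filter (fun t => x (t + 2) i ≠ x t i)).card : ℤ)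
        = ∑ t ∈ Finset.range T, ∑ i : V, (if x (t+2) i ≠ x t i then (2:ℤ) else 0) := by
          rw [Finset.mul_sum]
          rw [Finset.sum_congr rfl (fun i _ => by rw [hcards i, Finset.mul_sum])]
          rw [Finset.sum_comm]
          exact Finset.sum_congr rfl fun t _ => Finset.sum_congr rfl fun i _ => by
            split <;> ring
      _ ≤ ∑ t ∈ Finset.range T, (E (t+1) - E t) := by
          apply Finset.sum_le_sum
          intro t _
          rw [hstep t]
          exact Finset.sum_le_sum fun i _ => hterm t i
      _ = E T - E 0 := Finset.sum_range_sub E T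
      _ ≤ |E T| + |E 0| := by
          have := abs_nonneg (E 0)
          have h1 := le_abs_self (E T)
          have h2 := neg_abs_le (E 0)
          linarith
      _ ≤ (n : ℤ) * (d+1) + n * (d+1) := add_le_add (hEbound T) (hEbound 0)
      _ = 2 * (n * (d + 1)) := by ring
  -- the natural-number bound  ∑ cards ≤ 2 * d * n
  have hmain : (∑ i : V,
      ((Finset.range T).filter (fun t => x (t + 2) i ≠ x t i)).card : ℤ)
      ≤ 2 * d * n := by
    rcases Nat.eq_zero_or_pos d with hd | hd
    · -- d = 0 : no flips at all
      subst hd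
      have hNi : ∀ i, N i = {i} := by
        intro i
        have hsub : N i ⊆ {i} := by
          intro j hj
          by_cases h : j = i
          · simp [h]
          · exfalso
            have hadj : G.Adj i j := (hN i j (fun e => h e.symm)).mp hj
            have : 0 < G.degree i := by
              rw [← SimpleGraph.card_neighborFinset_eq_degree]
              exact Finset.card_pos.mpr ⟨j, (SimpleGraph.mem_neighborFinset _ _ _).mpr hadj⟩
            have := hdeg i
            omega
        have h1 : 1 ≤ (N i).card := by
          rcases hodd i with ⟨k, hk⟩; omega
        exact Finset.eq_of_subset_of_card_le hsub (by simpa using h1)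
      have hconst : ∀ t i, x (t+1) i = x t i := by
        intro t i
        rw [hdyn t i, hNi i, Finset.sum_singleton]
        rcases hpm t i with h | h <;> simp [h]
      have hzero : ∀ i : V,
          ((Finset.range T).filter (fun t => x (t + 2) i ≠ x t i)).card = 0 := by
        intro i
        rw [Finset.card_eq_zero, Finset.filter_eq_empty_iff]
        intro t _
        simp only [ne_eq, not_not]
        rw [hconst (t+1) i, hconst t i]
      simp only [ne_eq, hzero, Nat.cast_zero, Finset.sum_const_zero]
      simp
    · have h1 : (∑ i : V,
          ((Finset.range T).filter (fun t => x (t + 2) i ≠ x t i)).card : ℤ)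
          ≤ n * (d + 1) := by
        push_cast at hflipZ ⊢
        linarith
      have h2 : (n : ℤ) * (d + 1) ≤ 2 * d * n := by
        have : (1:ℤ) ≤ d := by exact_mod_cast hd
        have hn0 : (0:ℤ) ≤ n := Int.natCast_nonneg n
        nlinarith
      linarith
  -- pass to ℝ
  have hnpos : (0:ℝ) < n := by
    have : 0 < n := Fintype.card_pos
    exact_mod_cast this
  rw [div_le_iff₀ hnpos]
  have : (∑ i : V,
      ((Finset.range T).filter (fun t => x (t + 2) i ≠ x t i)).card : ℝ)
      ≤ 2 * d * n := by exact_mod_cast hmain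
  linarith [this]
end

section
/- If X ~ Bin(n-1,p) with 0 < p < 1, then E[√X] ≥ √((n-1)p) - 1/(2√((n-1)p)). -/
open Finset

lemma sumA (m : ℕ) (p q : ℝ) :
    ∑ k ∈ range (m+1), (m.choose k : ℝ) * p ^ k * q ^ (m - k) = (p + q) ^ m := by
  rw [add_pow]
  exact Finset.sum_congr rfl fun k _ => by ring

lemma sumB (m : ℕ) (p q : ℝ) :
    ∑ k ∈ range (m+1), (k : ℝ) * ((m.choose k : ℝ) * p ^ k * q ^ (m - k))
      = m * p * (p + q) ^ (m - 1) := by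
  cases m with
  | zero => simp
  | succ m =>
    rw [Finset.sum_range_succ']
    simp only [Nat.cast_zero, zero_mul, add_zero]
    have : ∀ j ∈ range (m+1),
        ((j+1 : ℕ) : ℝ) * (((m+1).choose (j+1) : ℝ) * p ^ (j+1) * q ^ (m+1 - (j+1)))
        = (m+1 : ℝ) * p * ((m.choose j : ℝ) * p ^ j * q ^ (m - j)) := by
      intro j _
      have h : (m+1) * m.choose j = (m+1).choose (j+1) * (j+1) := Nat.add_one_mul_choose_eq m j
      have h' : ((m:ℝ)+1) * (m.choose j : ℝ) = ((m+1).choose (j+1) : ℝ) * ((j:ℝ)+1) := by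
        exact_mod_cast congrArg (Nat.cast : ℕ → ℝ) h
      have : m + 1 - (j+1) = m - j := by omega
      rw [this]
      push_cast
      linear_combination (-(p ^ (j+1) * q ^ (m - j))) * h'
    rw [Finset.sum_congr rfl this, ← Finset.mul_sum, sumA m p q]
    push_cast
    ring

lemma sumC (m : ℕ) (p q : ℝ) :
    ∑ k ∈ range (m+1), (k : ℝ) * ((k : ℝ) - 1) * ((m.choose k : ℝ) * p ^ k * q ^ (m - k))
      = m * ((m : ℝ) - 1) * p ^ 2 * (p + q) ^ (m - 2) := by
  cases m with
  | zero => simp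
  | succ m =>
    rw [Finset.sum_range_succ']
    simp only [Nat.cast_zero, zero_mul, add_zero]
    have : ∀ j ∈ range (m+1),
        ((j+1 : ℕ) : ℝ) * (((j+1 : ℕ) : ℝ) - 1) * (((m+1).choose (j+1) : ℝ) * p ^ (j+1) * q ^ (m+1 - (j+1)))
        = (m+1 : ℝ) * p * ((j : ℝ) * ((m.choose j : ℝ) * p ^ j * q ^ (m - j))) := by
      intro j _
      have h : (m+1) * m.choose j = (m+1).choose (j+1) * (j+1) := Nat.add_one_mul_choose_eq m j
      have h' : ((m:ℝ)+1) * (m.choose j : ℝ) = ((m+1).choose (j+1) : ℝ) * ((j:ℝ)+1) := by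
        exact_mod_cast congrArg (Nat.cast : ℕ → ℝ) h
      have hmj : m + 1 - (j+1) = m - j := by omega
      rw [hmj]
      push_cast
      linear_combination (-((j:ℝ) * p ^ (j+1) * q ^ (m - j))) * h'
    rw [Finset.sum_congr rfl this, ← Finset.mul_sum, sumB m p q]
    have he : m + 1 - 2 = m - 1 := by omega
    rw [he]
    push_cast
    ring

lemma pointwise (x μ : ℝ) (hx : 0 ≤ x) (hμ : 0 < μ) :
    Real.sqrt μ + (x - μ) / (2 * Real.sqrt μ) - (x - μ)^2 / (2 * μ * Real.sqrt μ)
      ≤ Real.sqrt x := by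
  set s := Real.sqrt x with hs
  set r := Real.sqrt μ with hr
  have hs0 : 0 ≤ s := Real.sqrt_nonneg x
  have hr0 : 0 < r := Real.sqrt_pos.mpr hμ
  have hx2 : s ^ 2 = x := Real.sq_sqrt hx
  have hμ2 : r ^ 2 = μ := Real.sq_sqrt hμ.le
  have hrw : r + (x - μ) / (2 * r) - (x - μ)^2 / (2 * μ * r)
      = (2 * μ * r ^ 2 + μ * (x - μ) - (x - μ)^2) / (2 * μ * r) := by
    field_simp
  rw [hrw, div_le_iff₀ (by positivity)]
  nlinarith [mul_nonneg (mul_nonneg hs0 (by linarith : (0:ℝ) ≤ s + 2*r)) (sq_nonneg (s - r))]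

/-- If `X ~ Bin(n-1, p)` with `0 < p < 1`, then
`E[√X] ≥ √((n-1)p) - 1/(2√((n-1)p))`. -/
theorem binomial_sqrt_expectation (n : ℕ) (hn : 1 ≤ n) (p : ℝ)
    (hp0 : 0 < p) (hp1 : p < 1) :
    Real.sqrt ((n - 1 : ℕ) * p) - 1 / (2 * Real.sqrt ((n - 1 : ℕ) * p))
      ≤ ∑ k ∈ Finset.range n,
          ((n - 1).choose k : ℝ) * p ^ k * (1 - p) ^ (n - 1 - k)
            * Real.sqrt k := by
  rcases n with _ | m
  · omega
  simp only [Nat.add_sub_cancel]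
  rcases Nat.eq_zero_or_pos m with rfl | hm
  · simp
  set q : ℝ := 1 - p with hq
  set μ : ℝ := (m : ℝ) * p with hμdef
  have hμ : 0 < μ := mul_pos (by exact_mod_cast hm) hp0
  set w : ℕ → ℝ := fun k => (m.choose k : ℝ) * p ^ k * q ^ (m - k) with hw
  have hpq : p + q = 1 := by simp [hq]
  have hS0 : ∑ k ∈ range (m+1), w k = 1 := by
    have := sumA m p q; rw [hpq, one_pow] at this; exact this
  have hS1 : ∑ k ∈ range (m+1), (k : ℝ) * w k = μ := by
    have := sumB m p q; rw [hpq, one_pow, mul_one] at this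
    exact this
  have hS2 : ∑ k ∈ range (m+1), (k : ℝ) * ((k : ℝ) - 1) * w k = μ ^ 2 - μ * p := by
    have := sumC m p q; rw [hpq, one_pow] at this
    rw [this, hμdef]; ring
  set s : ℝ := Real.sqrt μ with hs
  have hs0 : 0 < s := Real.sqrt_pos.mpr hμ
  have hq0 : (0:ℝ) ≤ q := by rw [hq]; linarith
  have hwnn : ∀ k, 0 ≤ w k := fun k =>
    mul_nonneg (mul_nonneg (Nat.cast_nonneg _) (pow_nonneg hp0.le _)) (pow_nonneg hq0 _)
  -- the key sum identity
  have key : ∑ k ∈ range (m+1),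
      w k * (s + ((k : ℝ) - μ) / (2 * s) - ((k : ℝ) - μ)^2 / (2 * μ * s))
      = s - q / (2 * s) := by
    have expand : ∀ k ∈ range (m+1),
        w k * (s + ((k : ℝ) - μ) / (2 * s) - ((k : ℝ) - μ)^2 / (2 * μ * s))
        = (s - μ / s) * w k + (1 / (2*s) - (1 - 2*μ) / (2*μ*s)) * ((k:ℝ) * w k)
          + (-(1 / (2*μ*s))) * ((k:ℝ) * ((k:ℝ) - 1) * w k) := by
      intro k _
      field_simp
      ring
    rw [Finset.sum_congr rfl expand]
    rw [Finset.sum_add_distrib, Finset.sum_add_distrib, ← Finset.mul_sum, ← Finset.mul_sum,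
      ← Finset.mul_sum, hS0, hS1, hS2]
    field_simp
    ring
  have step : s - q / (2 * s) ≤ ∑ k ∈ range (m+1), w k * Real.sqrt k := by
    rw [← key]
    apply Finset.sum_le_sum
    intro k _
    exact mul_le_mul_of_nonneg_left (pointwise (k : ℝ) μ (Nat.cast_nonneg k) hμ) (hwnn k)
  have final : s - 1 / (2 * s) ≤ s - q / (2 * s) := by
    have h1 : q / (2 * s) ≤ 1 / (2 * s) := by
      gcongr
      linarith
    linarith
  exact final.trans step
end

section
/- Suppose a finite graph G = (V,E) with |V| = n satisfies |E(A,B) - p|A||B|| ≤ λ√(|A||B|) for all A,B ⊆ V, where E(A,B) = #{(u,v) ∈ E : u ∈ A, v ∈ B}. If at some time t the global mean m(t) = (1/n)Σ_i x_i(t) satisfies |m(t)| ≥ α > 0, then the number of vertices i with x_i(t+1) = -sgn(m(t)) is at most 2λ²/(α² p² n). -/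
/-!
Up to negating the configuration the mean is positive. Let `P`, `N` be the vertices carrying
`1` and `-1`, and `B` those whose neighbourhood sum is negative, i.e. those that turn to `-1`.
Each vertex of `B` has at least as many neighbours in `N` as in `P`, so `E(B,P) ≤ E(B,N)`, and
the mixing bound applied to both sides gives
`p|B|(|P| - |N|) ≤ λ(√(|B||P|) + √(|B||N|)) ≤ λ√(2|B|n)`.
As `|P| - |N| = n·m ≥ αn`, squaring yields `|B| ≤ 2λ²/(α²p²n)`.
-/

open Finset

theorem Real.sign_eq_neg_one_iff {r : ℝ} : Real.sign r = -1 ↔ r < 0 := by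
  refine ⟨fun h => ?_, Real.sign_of_neg⟩
  rcases lt_trichotomy r 0 with hr | rfl | hr
  · exact hr
  · norm_num [Real.sign_zero] at h
  · norm_num [Real.sign_of_pos hr] at h

theorem Real.sign_eq_one_iff {r : ℝ} : Real.sign r = 1 ↔ 0 < r := by
  rw [← neg_inj, ← Real.sign_neg, Real.sign_eq_neg_one_iff, neg_lt_zero]

section PlusMinusOne

variable {ι : Type*} {y : ι → ℝ}

theorem Finset.filter_not_eq_one_eq_filter_eq_neg_one (hy : ∀ i, y i = 1 ∨ y i = -1)
    (s : Finset ι) : {i ∈ s | ¬ y i = 1} = {i ∈ s | y i = -1} :=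
  filter_congr fun i _ => by rcases hy i with h | h <;> norm_num [h]

theorem Finset.card_filter_eq_one_add_card_filter_eq_neg_one (hy : ∀ i, y i = 1 ∨ y i = -1)
    (s : Finset ι) : #{i ∈ s | y i = 1} + #{i ∈ s | y i = -1} = #s := by
  rw [← filter_not_eq_one_eq_filter_eq_neg_one hy, card_filter_add_card_filter_not]

theorem Finset.sum_eq_card_filter_eq_one_sub_card_filter_eq_neg_one
    (hy : ∀ i, y i = 1 ∨ y i = -1) (s : Finset ι) :
    ∑ i ∈ s, y i = #{i ∈ s | y i = 1} - #{i ∈ s | y i = -1} := by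
  rw [← sum_filter_add_sum_filter_not s (fun i => y i = 1),
    filter_not_eq_one_eq_filter_eq_neg_one hy, sum_congr rfl fun i hi => (mem_filter.mp hi).2,
    sum_congr rfl fun i hi => (mem_filter.mp hi).2]
  simp [sub_eq_add_neg]

end PlusMinusOne

namespace SimpleGraph

variable {V : Type*} (G : SimpleGraph V) [DecidableRel G.Adj]

theorem card_interedges_filter_eq_sum [Fintype V] (s : Finset V) (q : V → Prop)
    [DecidablePred q] :
    #(G.interedges s {j | q j}) = ∑ i ∈ s, #{j ∈ G.neighborFinset i | q j} := by
  rw [interedges_def, card_filter, sum_product]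
  refine sum_congr rfl fun i _ => ?_
  rw [← card_filter, neighborFinset_eq_filter, filter_filter, filter_filter]
  simp_rw [and_comm]

theorem card_interedges_eq_one_le_card_interedges_eq_neg_one [Fintype V] {y : V → ℝ}
    (hy : ∀ i, y i = 1 ∨ y i = -1) {s : Finset V}
    (hs : ∀ i ∈ s, ∑ j ∈ G.neighborFinset i, y j ≤ 0) :
    #(G.interedges s {j | y j = 1}) ≤ #(G.interedges s {j | y j = -1}) := by
  have hdiff : ∑ i ∈ s, ∑ j ∈ G.neighborFinset i, y j
      = (#(G.interedges s {j | y j = 1}) : ℝ) - #(G.interedges s {j | y j = -1}) := by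
    rw [card_interedges_filter_eq_sum, card_interedges_filter_eq_sum]
    push_cast
    rw [← sum_sub_distrib]
    exact sum_congr rfl fun i _ => sum_eq_card_filter_eq_one_sub_card_filter_eq_neg_one hy _
  exact_mod_cast sub_nonpos.mp (hdiff ▸ sum_nonpos hs)

def HasMixingBound (p lam : ℝ) : Prop :=
  ∀ A B : Finset V, |(#(G.interedges A B) : ℝ) - p * #A * #B| ≤ lam * √(#A * #B)

variable {G} {p lam : ℝ}

theorem HasMixingBound.sq_mul_card_sub_card_le (h : G.HasMixingBound p lam) (hp : 0 ≤ p)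
    {s t u : Finset V} (hut : #u ≤ #t) (hedges : #(G.interedges s t) ≤ #(G.interedges s u)) :
    (p * #s * (#t - #u)) ^ 2 ≤ 2 * lam ^ 2 * (#s * (#t + #u)) := by
  have hlin : p * #s * (#t - #u) ≤ lam * (√(#s * #t) + √(#s * #u)) := by
    have hst := (abs_le.mp (h s t)).1
    have hsu := (abs_le.mp (h s u)).2
    have hedges' : (#(G.interedges s t) : ℝ) ≤ #(G.interedges s u) := by exact_mod_cast hedges
    linarith
  have hut' : (#u : ℝ) ≤ #t := by exact_mod_cast hut
  calc (p * #s * (#t - #u)) ^ 2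
      ≤ (lam * (√(#s * #t) + √(#s * #u))) ^ 2 :=
        pow_le_pow_left₀ (mul_nonneg (by positivity) (sub_nonneg.mpr hut')) hlin 2
    _ = lam ^ 2 * (√(#s * #t) + √(#s * #u)) ^ 2 := mul_pow _ _ _
    _ ≤ lam ^ 2 * (2 * (√(#s * #t) ^ 2 + √(#s * #u) ^ 2)) := by gcongr; exact add_sq_le
    _ = 2 * lam ^ 2 * (#s * (#t + #u)) := by
        rw [Real.sq_sqrt (by positivity), Real.sq_sqrt (by positivity)]; ring

theorem HasMixingBound.card_neighbor_sum_neg_le_of_mul_card_le_sum [Fintype V]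
    (h : G.HasMixingBound p lam) (hp : 0 < p) {y : V → ℝ} (hy : ∀ i, y i = 1 ∨ y i = -1)
    {α : ℝ} (hα : 0 < α)
    (hmean : α * Fintype.card V ≤ ∑ i, y i) :
    (#{i | ∑ j ∈ G.neighborFinset i, y j < 0} : ℝ)
      ≤ 2 * lam ^ 2 / (α ^ 2 * p ^ 2 * Fintype.card V) := by
  set P : Finset V := {j | y j = 1}
  set N : Finset V := {j | y j = -1}
  set B : Finset V := {i | ∑ j ∈ G.neighborFinset i, y j < 0}
  have hsum : ∑ i, y i = #P - #N := sum_eq_card_filter_eq_one_sub_card_filter_eq_neg_one hy _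
  have hcard : (#P : ℝ) + #N = Fintype.card V := by
    rw [← Nat.cast_add, card_filter_eq_one_add_card_filter_eq_neg_one hy univ, card_univ]
  have hNP : #N ≤ #P := by
    have : (0 : ℝ) ≤ #P - #N := hsum ▸ le_trans (by positivity) hmean
    exact_mod_cast sub_nonneg.mp this
  have hedges : #(G.interedges B P) ≤ #(G.interedges B N) :=
    G.card_interedges_eq_one_le_card_interedges_eq_neg_one hy fun i hi => (mem_filter.mp hi).2.le
  have hkey := h.sq_mul_card_sub_card_le hp.le hNP hedges
  rw [← hsum, hcard] at hkey
  rcases B.eq_empty_or_nonempty with hB | hB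
  · rw [hB, card_empty, Nat.cast_zero]
    positivity
  have hBpos : (0 : ℝ) < #B := by exact_mod_cast hB.card_pos
  have hn : (0 : ℝ) < Fintype.card V := by
    exact_mod_cast Fintype.card_pos_iff.mpr ⟨hB.choose⟩
  rw [le_div_iff₀ (by positivity)]
  refine le_of_mul_le_mul_right ?_ (mul_pos hBpos hn)
  calc #B * (α ^ 2 * p ^ 2 * Fintype.card V) * (#B * Fintype.card V)
      = (p * #B * (α * Fintype.card V)) ^ 2 := by ring
    _ ≤ (p * #B * ∑ i, y i) ^ 2 := by gcongr
    _ ≤ 2 * lam ^ 2 * (#B * Fintype.card V) := hkey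

theorem HasMixingBound.card_majority_against_sign_mean_le [Fintype V]
    (h : G.HasMixingBound p lam) (hp : 0 < p) {y z : V → ℝ} (hy : ∀ i, y i = 1 ∨ y i = -1)
    (hz : ∀ i, z i = Real.sign (∑ j ∈ G.neighborFinset i, y j)) {α : ℝ} (hα : 0 < α)
    (hmean : α ≤ |(∑ i, y i) / Fintype.card V|) :
    (#{i | z i = -Real.sign ((∑ i, y i) / Fintype.card V)} : ℝ)
      ≤ 2 * lam ^ 2 / (α ^ 2 * p ^ 2 * Fintype.card V) := by
  have hm : (∑ i, y i) / Fintype.card V ≠ 0 := abs_pos.mp (hα.trans_le hmean)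
  have hn : (0 : ℝ) < Fintype.card V :=
    (Nat.cast_nonneg _).lt_of_ne fun h0 => hm (by rw [← h0, div_zero])
  have hS : ∑ i, y i ≠ 0 := fun h0 => hm (by rw [h0, zero_div])
  rw [abs_div, Nat.abs_cast, le_div_iff₀ hn] at hmean
  rcases hS.lt_or_gt with hneg | hpos
  · rw [Real.sign_of_neg (div_neg_of_neg_of_pos hneg hn), neg_neg]
    rw [abs_of_neg hneg, ← sum_neg_distrib] at hmean
    have hy' : ∀ i, -y i = 1 ∨ -y i = -1 := fun i =>
      (hy i).symm.imp (by simp [·]) (by simp [·])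
    convert h.card_neighbor_sum_neg_le_of_mul_card_le_sum hp hy' hα hmean using 4 with i
    rw [hz, Real.sign_eq_one_iff, sum_neg_distrib, neg_lt_zero]
  · rw [Real.sign_of_pos (div_pos hpos hn)]
    rw [abs_of_pos hpos] at hmean
    convert h.card_neighbor_sum_neg_le_of_mul_card_le_sum hp hy hα hmean using 4 with i
    rw [hz, Real.sign_eq_neg_one_iff]

end SimpleGraph

theorem expander_mixing_majority_step_general
    {V : Type*} [Fintype V]
    (G : SimpleGraph V) [DecidableRel G.Adj]
    (p lam : ℝ) (hp : 0 < p)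
    (hmix : ∀ A B : Finset V,
      |((((A ×ˢ B).filter (fun e => G.Adj e.1 e.2)).card : ℝ))
          - p * A.card * B.card|
        ≤ lam * Real.sqrt (A.card * B.card))
    (x : ℕ → V → ℝ)
    (hx : ∀ (t : ℕ) (i : V), x t i = 1 ∨ x t i = -1)
    (hdyn : ∀ (t : ℕ) (i : V),
      x (t + 1) i = Real.sign (∑ j ∈ G.neighborFinset i, x t j))
    (t : ℕ) (α : ℝ) (hα : 0 < α)
    (hmean : α ≤ |(∑ i : V, x t i) / (Fintype.card V)|) :
    ((Finset.univ.filter (fun i : V =>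
        x (t + 1) i = -Real.sign ((∑ i : V, x t i) / (Fintype.card V)))).card
      : ℝ)
      ≤ 2 * lam ^ 2 / (α ^ 2 * p ^ 2 * (Fintype.card V)) :=
  SimpleGraph.HasMixingBound.card_majority_against_sign_mean_le hmix hp (hx t) (hdyn t) hα hmean

/-- **Expander Mixing Lemma implies fast homogenization of majority dynamics.**
Suppose the finite graph `G` on `n` vertices satisfies
`|E(A,B) - p|A||B|| ≤ λ √(|A||B|)` for all vertex sets `A, B`, where
`E(A,B) = #{(u,v) : u ∈ A, v ∈ B, u ~ v}`.  If at some time `t` the global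
mean `m t = (1/n) ∑ᵢ x t i` of the (tie-free) majority dynamics satisfies
`|m t| ≥ α > 0`, then at most `2λ²/(α² p² n)` vertices `i` have
`x (t+1) i = -sgn (m t)`. -/
theorem expander_mixing_majority_step
    {V : Type*} [Fintype V] [DecidableEq V]
    (G : SimpleGraph V) [DecidableRel G.Adj]
    (p lam : ℝ) (hp : 0 < p)
    (hmix : ∀ A B : Finset V,
      |((((A ×ˢ B).filter (fun e => G.Adj e.1 e.2)).card : ℝ))
          - p * A.card * B.card|
        ≤ lam * Real.sqrt (A.card * B.card))
    (x : ℕ → V → ℝ)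
    (hx : ∀ (t : ℕ) (i : V), x t i = 1 ∨ x t i = -1)
    (hties : ∀ (t : ℕ) (i : V), (∑ j ∈ G.neighborFinset i, x t j) ≠ 0)
    (hdyn : ∀ (t : ℕ) (i : V),
      x (t + 1) i = Real.sign (∑ j ∈ G.neighborFinset i, x t j))
    (t : ℕ) (α : ℝ) (hα : 0 < α)
    (hmean : α ≤ |(∑ i : V, x t i) / (Fintype.card V)|) :
    ((Finset.univ.filter (fun i : V =>
        x (t + 1) i = -Real.sign ((∑ i : V, x t i) / (Fintype.card V)))).card
      : ℝ)
      ≤ 2 * lam ^ 2 / (α ^ 2 * p ^ 2 * (Fintype.card V)) :=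
  expander_mixing_majority_step_general G p lam hp hmix x hx hdyn t α hα hmean
end

section
/- There exists a countably infinite, locally finite graph G and an i.i.d. uniform {-1,+1} initial opinion assignment such that, almost surely, the opinion sequence of some vertex does not converge to a cycle of period at most two: specifically, in the graph with levels L_0, L_1, L_2, ... where |L_n| = 2^n - 1 and each vertex of L_n is adjacent to all vertices of L_{n-1}, L_n, and L_{n+1}, all vertices in a level share the same opinion from time 1 on, x_{L_n}(t) = x_{L_{n+1}}(t-1) for t ≥ 2, and hence x_{L_0}(t) = x_{L_{t+1}}(1); since {x_{L_{3n}}(1)} are i.i.d. uniform, x_{L_0}(t) almost surely fails to be eventually 2-periodic. -/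
open MeasureTheory ProbabilityTheory Finset Function
open scoped ENNReal

/-!
Level `n` of the graph has `3 ^ n` vertices and every vertex sees its own level and the two
adjacent ones. From time `1` on each level is therefore unanimous, and since level `n + 1`
outnumbers levels `n - 1` and `n` together, level `n` shows at time `t + 1` what level `n + 1`
showed at time `t`. Hence vertex `0` shows at time `t + 1` the majority of the initial opinions
on levels `t - 1, t, t + 1`. Along windows three levels apart these majorities are independent
fair signs, so they are almost surely not constant, whereas `2`-periodicity of vertex `0` from
some time on would make them constant along every other time step.
-/

lemma Int.sign_sum_eq_one_or_neg_one {ι : Type*} {s : Finset ι} {f : ι → ℤ}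
    (hs : Odd #s) (hf : ∀ i ∈ s, f i = 1 ∨ f i = -1) :
    Int.sign (∑ i ∈ s, f i) = 1 ∨ Int.sign (∑ i ∈ s, f i) = -1 := by
  have hodd : Odd (∑ i ∈ s, f i) := by
    have hmod : ∀ i ∈ s, f i % 2 = 1 := fun i hi => by rcases hf i hi with h | h <;> simp [h]
    rw [Int.odd_iff, Finset.sum_int_mod, Finset.sum_congr rfl hmod, sum_const, nsmul_one,
      ← Int.odd_iff]
    exact_mod_cast hs
  rcases lt_trichotomy (∑ i ∈ s, f i) 0 with h | h | h
  · exact .inr (Int.sign_eq_neg_one_of_neg h)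
  · simp [h] at hodd
  · exact .inl (Int.sign_eq_one_of_pos h)

lemma Int.sign_sum_union_eq_sign {ι : Type*} [DecidableEq ι] {A B : Finset ι} {f : ι → ℤ} {y : ℤ}
    (hAB : Disjoint A B) (hcard : #A < #B) (hA : ∀ i ∈ A, |f i| ≤ 1) (hB : ∀ i ∈ B, f i = y)
    (hy : y ≠ 0) : Int.sign (∑ i ∈ A ∪ B, f i) = Int.sign y := by
  have hsumA : |∑ i ∈ A, f i| ≤ #A :=
    (abs_sum_le_sum_abs _ _).trans (by simpa using sum_le_sum hA)
  have hsumB : ∑ i ∈ B, f i = #B * y := by rw [sum_congr rfl hB, sum_const, nsmul_eq_mul]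
  rw [sum_union hAB, hsumB]
  rcases hy.lt_or_gt with hy | hy
  · rw [Int.sign_eq_neg_one_of_neg hy, Int.sign_eq_neg_one_of_neg]
    nlinarith [abs_le.mp hsumA]
  · rw [Int.sign_eq_one_of_pos hy, Int.sign_eq_one_of_pos]
    nlinarith [abs_le.mp hsumA]

def IsMajorityDynamics {V : Type*} (N : V → Finset V) (x : ℕ → V → ℤ) : Prop :=
  ∀ t v, x (t + 1) v = Int.sign (∑ u ∈ N v, x t u)

lemma IsMajorityDynamics.eq_one_or_neg_one {V : Type*} {N : V → Finset V} {x : ℕ → V → ℤ}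
    (hx : IsMajorityDynamics N x) (hN : ∀ v, Odd #(N v)) (h0 : ∀ v, x 0 v = 1 ∨ x 0 v = -1) :
    ∀ t v, x t v = 1 ∨ x t v = -1
  | 0 => h0
  | t + 1 => fun v => by
    rw [hx]
    exact Int.sign_sum_eq_one_or_neg_one (hN v) fun u _ => hx.eq_one_or_neg_one hN h0 t u

def levelStart : ℕ → ℕ
  | 0 => 0
  | n + 1 => 3 * levelStart n + 1

lemma two_mul_levelStart_add_one (n : ℕ) : 2 * levelStart n + 1 = 3 ^ n := by
  induction n with
  | zero => rfl
  | succ n ih => rw [levelStart, pow_succ, ← ih]; ring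

lemma levelStart_mono : Monotone levelStart := by
  refine monotone_nat_of_le_succ fun n => ?_
  rw [levelStart]; omega

def level (v : ℕ) : ℕ := Nat.log 3 (2 * v + 1)

lemma levelStart_le_iff {n v : ℕ} : levelStart n ≤ v ↔ n ≤ level v := by
  rw [level, Nat.le_log_iff_pow_le (by norm_num) (by omega), ← two_mul_levelStart_add_one]
  omega

lemma lt_levelStart_iff {n v : ℕ} : v < levelStart n ↔ level v < n := by
  simpa using levelStart_le_iff.not

lemma level_zero : level 0 = 0 := rfl

lemma level_levelStart (n : ℕ) : level (levelStart n) = n :=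
  le_antisymm (Nat.lt_succ_iff.mp (lt_levelStart_iff.mp (by rw [levelStart]; omega)))
    (levelStart_le_iff.mp le_rfl)

/-- Level `n` is the interval `[levelStart n, levelStart (n + 1))`; `window n` is the
neighbourhood of a vertex of level `n`, itself included, except that the only vertex `0` of level
`0` sees level `1` alone, which keeps every neighbourhood odd. -/
def window : ℕ → Finset ℕ
  | 0 => Ico (levelStart 1) (levelStart 2)
  | n + 1 => Ico (levelStart n) (levelStart (n + 3))

def levelNbhd (v : ℕ) : Finset ℕ := window (level v)

lemma mem_window {u n : ℕ} :
    u ∈ window n ↔ level u ≤ n + 1 ∧ n ≤ level u + 1 ∧ 0 < level u + n := by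
  cases n <;> simp only [window, mem_Ico, levelStart_le_iff, lt_levelStart_iff] <;> omega

lemma mem_levelNbhd_comm (u v : ℕ) : u ∈ levelNbhd v ↔ v ∈ levelNbhd u := by
  simp only [levelNbhd, mem_window]
  omega

lemma odd_card_window (n : ℕ) : Odd #(window n) := by
  cases n with
  | zero => decide
  | succ n =>
    simp only [window, Nat.card_Ico, levelStart]
    exact ⟨13 * levelStart n + 6, by omega⟩

lemma disjoint_window_of_add_three_le {m n : ℕ} (h : m + 3 ≤ n) :
    Disjoint (window m) (window n) := by
  simp only [disjoint_left, mem_window]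
  omega

lemma exists_window_eq_Ico (n : ℕ) :
    ∃ a ≤ levelStart (n + 1), window n = Ico a (levelStart (n + 2)) := by
  cases n with
  | zero => exact ⟨_, le_rfl, rfl⟩
  | succ n => exact ⟨levelStart n, levelStart_mono (by omega), rfl⟩

namespace IsMajorityDynamics

variable {x : ℕ → ℕ → ℤ} (hx : IsMajorityDynamics levelNbhd x)
  (h0 : ∀ v, x 0 v = 1 ∨ x 0 v = -1)
include hx h0

lemma succ_succ_eq_next_level (t v : ℕ) : x (t + 2) v = x (t + 1) (levelStart (level v + 1)) := by
  obtain ⟨a, ha, hwin⟩ := exists_window_eq_Ico (level v)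
  have hsplit := Ico_union_Ico_eq_Ico ha (levelStart_mono (Nat.le_succ (level v + 1)))
  have hy : Int.sign (x (t + 1) (levelStart (level v + 1))) =
      x (t + 1) (levelStart (level v + 1)) := by
    rw [hx t, Int.sign_sign]
  rw [hx (t + 1) v, levelNbhd, hwin, ← hsplit, Int.sign_sum_union_eq_sign
    (Ico_disjoint_Ico_consecutive _ _ _) ?card ?small ?large ?nonzero, hy]
  case card =>
    simp only [Nat.card_Ico, levelStart] at ha ⊢
    omega
  case small =>
    intro u _
    rw [hx]
    rcases Int.sign_trichotomy (∑ w ∈ levelNbhd u, x t w) with h | h | h <;> simp [h]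
  case large =>
    intro u hu
    have hlevel : level u = level v + 1 := by
      rw [mem_Ico, levelStart_le_iff, lt_levelStart_iff] at hu
      omega
    rw [hx, hx, levelNbhd, levelNbhd, hlevel, level_levelStart]
  case nonzero =>
    rcases hx.eq_one_or_neg_one (fun v => odd_card_window (level v)) h0 (t + 1)
      (levelStart (level v + 1)) with h | h <;> rw [h] <;> decide

lemma succ_eq_sign_sum_window (t v : ℕ) :
    x (t + 1) v = Int.sign (∑ u ∈ window (level v + t), x 0 u) := by
  induction t generalizing v with
  | zero => exact hx 0 v
  | succ t ih =>
    rw [hx.succ_succ_eq_next_level h0, ih, level_levelStart, Nat.add_right_comm, Nat.add_assoc]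

end IsMajorityDynamics

namespace ProbabilityTheory

variable {Ω : Type*} [MeasurableSpace Ω] {μ : Measure Ω}

lemma iIndepFun.iIndepFun_restrict_of_pairwise_disjoint {ι κ β : Type*} [MeasurableSpace β]
    {X : ι → Ω → β} (hX : iIndepFun X μ) (hXm : ∀ i, Measurable (X i)) {W : κ → Finset ι}
    (hW : Pairwise (Disjoint on W)) : iIndepFun (fun k ω (i : W k) => X i ω) μ := by
  classical
  have := hX.isProbabilityMeasure
  rw [iIndepFun_iff_measure_inter_preimage_eq_mul]
  intro S
  induction S using Finset.induction_on with
  | empty => simp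
  | insert a S ha ih =>
    intro t ht
    let T := S.biUnion W
    have hdisj : Disjoint (W a) T :=
      (disjoint_biUnion_right _ _ _).2 fun k hk => hW (ne_of_mem_of_not_mem hk ha).symm
    let U : Set (T → β) := ⋂ k : S,
      (fun g (i : W k) => g ⟨i, mem_biUnion.2 ⟨k, k.2, i.2⟩⟩) ⁻¹' t k
    have hU : MeasurableSet U := .iInter fun k =>
      measurable_pi_lambda _ (fun _ => measurable_pi_apply _) (ht k (mem_insert_of_mem k.2))
    have hpre : ⋂ k ∈ S, (fun ω (i : W k) => X i ω) ⁻¹' t k = (fun ω (i : T) => X i ω) ⁻¹' U := by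
      ext ω
      simp [U]
    rw [set_biInter_insert, prod_insert ha, ← ih fun k hk => ht k (mem_insert_of_mem hk), hpre,
      (hX.indepFun_finset _ _ hdisj hXm).measure_inter_preimage_eq_mul _ _
        (ht a (mem_insert_self a S)) hU]

lemma iIndepFun.iIndepFun_sign_sum_of_pairwise_disjoint {ι κ : Type*} {X : ι → Ω → ℤ}
    (hX : iIndepFun X μ) (hXm : ∀ i, Measurable (X i)) {W : κ → Finset ι}
    (hW : Pairwise (Disjoint on W)) : iIndepFun (fun k ω => Int.sign (∑ i ∈ W k, X i ω)) μ := by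
  convert (hX.iIndepFun_restrict_of_pairwise_disjoint hXm hW).comp
    (fun k (f : W k → ℤ) => Int.sign (∑ i, f i)) (fun _ => measurable_of_countable _) using 1
  funext k ω
  exact congrArg Int.sign (sum_coe_sort (W k) (X · ω)).symm

lemma iIndepFun.measure_setOf_exists_forall_eq_eq_zero {β : Type*} [MeasurableSpace β]
    [MeasurableSingletonClass β] [Countable β] {Y : ℕ → Ω → β} (hY : iIndepFun Y μ)
    {p : ℝ≥0∞} (hp : p < 1) (hYp : ∀ j b, μ (Y j ⁻¹' {b}) ≤ p) :
    μ {ω | ∃ b, ∀ j, Y j ω = b} = 0 := by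
  have hset : {ω | ∃ b, ∀ j, Y j ω = b} = ⋃ b, ⋂ j, Y j ⁻¹' {b} := by
    ext
    simp
  rw [hset]
  refine measure_iUnion_null fun b => le_antisymm ?_ bot_le
  refine ge_of_tendsto' (ENNReal.tendsto_pow_atTop_nhds_zero_of_lt_one hp) fun K => ?_
  calc μ (⋂ j, Y j ⁻¹' {b})
      ≤ μ (⋂ j ∈ range K, Y j ⁻¹' {b}) := measure_mono (Set.iInter_mono fun _ =>
        Set.subset_iInter fun _ => subset_rfl)
    _ = ∏ j ∈ range K, μ (Y j ⁻¹' {b}) :=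
        hY.meas_biInter fun j _ => ⟨{b}, measurableSet_singleton b, rfl⟩
    _ ≤ ∏ _j ∈ range K, p := prod_le_prod' fun j _ => hYp j b
    _ = p ^ K := by rw [prod_const, card_range]

variable [IsProbabilityMeasure μ]

lemma ae_eq_one_or_neg_one {X : Ω → ℤ} (hX : Measurable X) (h1 : μ (X ⁻¹' {1}) = 1 / 2)
    (h2 : μ (X ⁻¹' {-1}) = 1 / 2) : ∀ᵐ ω ∂μ, X ω = 1 ∨ X ω = -1 := by
  have hmeas : MeasurableSet (X ⁻¹' {1, -1}) := hX ((measurableSet_singleton (-1)).insert 1)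
  refine (ae_mem_iff_measure_eq hmeas.nullMeasurableSet).2 ?_
  rw [Set.insert_eq, Set.preimage_union, measure_union (Disjoint.preimage X (by simp))
    (hX (measurableSet_singleton _)), h1, h2, ENNReal.add_halves, measure_univ]

lemma map_neg_eq_map {X : Ω → ℤ} (hX : Measurable X) (h1 : μ (X ⁻¹' {1}) = 1 / 2)
    (h2 : μ (X ⁻¹' {-1}) = 1 / 2) : μ.map (-X) = μ.map X := by
  refine Measure.ext_of_singleton fun a => ?_
  have hpre : (-X) ⁻¹' {a} = X ⁻¹' {-a} := by ext; exact neg_eq_iff_eq_neg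
  rw [Measure.map_apply hX.neg (measurableSet_singleton a),
    Measure.map_apply hX (measurableSet_singleton a), hpre]
  by_cases ha : a = 1 ∨ a = -1
  · rcases ha with rfl | rfl
    · rw [h2, h1]
    · rw [neg_neg, h1, h2]
  · have hnull (b : ℤ) (hb : b ≠ 1 ∧ b ≠ -1) : μ (X ⁻¹' {b}) = 0 :=
      measure_eq_zero_iff_ae_notMem.2 <| (ae_eq_one_or_neg_one hX h1 h2).mono fun ω hω => by
        rintro rfl
        tauto
    rw [hnull a (by tauto), hnull (-a) (by omega)]

variable {ι : Type*} {X : ι → Ω → ℤ} (hXm : ∀ i, Measurable (X i)) (hX : iIndepFun X μ)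
  (hXu : ∀ i, μ (X i ⁻¹' {1}) = 1 / 2 ∧ μ (X i ⁻¹' {-1}) = 1 / 2)
include hXm hX hXu

lemma map_restrict_neg_eq_map_restrict (s : Finset ι) :
    μ.map (fun ω (i : s) => -X i ω) = μ.map (fun ω (i : s) => X i ω) := by
  have hneg : iIndepFun (fun i ω => -X i ω) μ := hX.comp (fun _ => Neg.neg) fun _ => measurable_neg
  rw [(iIndepFun_iff_map_fun_eq_pi_map (f := fun (i : s) ω => -X i ω)
      fun i => (hXm i).neg.aemeasurable).1 (hneg.precomp Subtype.val_injective),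
    (iIndepFun_iff_map_fun_eq_pi_map (f := fun (i : s) => X i)
      fun i => (hXm i).aemeasurable).1 (hX.precomp Subtype.val_injective)]
  congr with i : 1
  exact map_neg_eq_map (hXm i) (hXu i).1 (hXu i).2

lemma measure_sign_sum_eq_neg (s : Finset ι) (c : ℤ) :
    μ {ω | Int.sign (∑ i ∈ s, X i ω) = -c} = μ {ω | Int.sign (∑ i ∈ s, X i ω) = c} := by
  let A : Set (s → ℤ) := {f | Int.sign (∑ i, f i) = c}
  have hpos : {ω | Int.sign (∑ i ∈ s, X i ω) = c} = (fun ω (i : s) => X i ω) ⁻¹' A := by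
    ext ω
    simp only [A, Set.mem_preimage, Set.mem_ofPred_eq, sum_coe_sort s (X · ω)]
  have hneg : {ω | Int.sign (∑ i ∈ s, X i ω) = -c} = (fun ω (i : s) => -X i ω) ⁻¹' A := by
    ext ω
    simp only [A, Set.mem_preimage, Set.mem_ofPred_eq, sum_coe_sort s (-X · ω), sum_neg_distrib,
      Int.sign_neg, neg_eq_iff_eq_neg]
  rw [hpos, hneg, ← Measure.map_apply (by fun_prop) (MeasurableSet.of_discrete),
    ← Measure.map_apply (by fun_prop) (MeasurableSet.of_discrete),
    map_restrict_neg_eq_map_restrict hXm hX hXu]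

lemma measure_sign_sum_eq_le_half {s : Finset ι} (hs : Odd #s) (c : ℤ) :
    μ {ω | Int.sign (∑ i ∈ s, X i ω) = c} ≤ 2⁻¹ := by
  have hmeas (c : ℤ) : MeasurableSet {ω | Int.sign (∑ i ∈ s, X i ω) = c} :=
    (measurable_of_countable Int.sign).comp (Finset.measurable_sum s fun i _ => hXm i)
      (measurableSet_singleton c)
  by_cases hc : c = 0
  · refine le_of_eq_of_le (measure_eq_zero_iff_ae_notMem.2 ?_) bot_le
    filter_upwards [(Filter.eventually_all_finset s).2 fun i _ =>
      ae_eq_one_or_neg_one (hXm i) (hXu i).1 (hXu i).2] with ω hω (hzero : _ = c)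
    rcases Int.sign_sum_eq_one_or_neg_one hs hω with h | h <;> omega
  · have hdisj : Disjoint {ω | Int.sign (∑ i ∈ s, X i ω) = c}
        {ω | Int.sign (∑ i ∈ s, X i ω) = -c} :=
      Set.disjoint_left.2 fun ω (h : _ = c) (h' : _ = -c) => hc (by omega)
    rw [ENNReal.le_inv_iff_mul_le, mul_two]
    nth_rw 2 [← measure_sign_sum_eq_neg hXm hX hXu]
    rw [← measure_union hdisj (hmeas _)]
    exact prob_le_one

end ProbabilityTheory

lemma apply_add_two_mul_eq {α : Type*} {f : ℕ → α} {T : ℕ} (h : ∀ t ≥ T, f (t + 2) = f t)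
    (k : ℕ) : f (T + 2 * k) = f T := by
  induction k with
  | zero => rfl
  | succ k ih => rw [Nat.mul_succ, ← Nat.add_assoc, h _ (Nat.le_add_right T _), ih]

/-- **An infinite graph without the almost sure period two property.**
There is a countably infinite, locally finite graph — presented through its
tie-adjusted neighborhoods `N : ℕ → Finset ℕ` (symmetric off the diagonal,
every `|N v|` odd) — such that for i.i.d. uniform `{-1,+1}` initial opinions,
the majority dynamics almost surely fails to be eventually `2`-periodic at
some vertex. -/
theorem exists_graph_without_as_period_two :
    ∃ N : ℕ → Finset ℕ,
      (∀ u v : ℕ, u ≠ v → (u ∈ N v ↔ v ∈ N u)) ∧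
      (∀ v : ℕ, Odd (N v).card) ∧
      ∀ (Ω : Type) (mΩ : MeasurableSpace Ω) (μ : Measure Ω),
        IsProbabilityMeasure μ →
        ∀ X : ℕ → Ω → ℤ,
          (∀ v, Measurable (X v)) →
          iIndepFun X μ →
          (∀ v : ℕ, μ (X v ⁻¹' {1}) = 1 / 2 ∧ μ (X v ⁻¹' {-1}) = 1 / 2) →
          ∀ x : ℕ → ℕ → Ω → ℤ,
            (∀ (v : ℕ) (ω : Ω), x 0 v ω = X v ω) →
            (∀ (t v : ℕ) (ω : Ω),
              x (t + 1) v ω = Int.sign (∑ u ∈ N v, x t u ω)) →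
            ∃ v : ℕ,
              μ {ω | ∃ T : ℕ, ∀ t ≥ T, x (t + 2) v ω = x t v ω} = 0 := by
  refine ⟨levelNbhd, fun u v _ => mem_levelNbhd_comm u v, fun v => odd_card_window (level v), ?_⟩
  intro Ω _ μ _ X hXm hXi hXu x hx0 hxs
  refine ⟨0, ?_⟩
  rw [Set.ofPred_exists]
  refine measure_iUnion_null fun T => ?_
  let W (j : ℕ) := window (T + 6 * j)
  have hW : Pairwise (Disjoint on W) := fun i j hij => by
    rcases hij.lt_or_gt with h | h
    exacts [disjoint_window_of_add_three_le (by omega),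
      (disjoint_window_of_add_three_le (by omega)).symm]
  refine measure_mono_null_ae ?_
    ((hXi.iIndepFun_sign_sum_of_pairwise_disjoint hXm hW).measure_setOf_exists_forall_eq_eq_zero
    (by norm_num : (2 : ℝ≥0∞)⁻¹ < 1)
    fun j c => measure_sign_sum_eq_le_half hXm hXi hXu (odd_card_window _) c)
  filter_upwards [ae_all_iff.2 fun v => ae_eq_one_or_neg_one (hXm v) (hXu v).1 (hXu v).2]
    with ω hω (hper : ∀ t ≥ T, x (t + 2) 0 ω = x t 0 ω)
  have hdyn : IsMajorityDynamics levelNbhd (x · · ω) := fun t v => hxs t v ω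
  have h0 (v : ℕ) : x 0 v ω = 1 ∨ x 0 v ω = -1 := hx0 v ω ▸ hω v
  -- vertex `0` is constant at the times `T + 1 + 6 * j`, when it shows the sign on `W j`
  refine ⟨x (T + 1) 0 ω, fun j => ?_⟩
  have hsign := hdyn.succ_eq_sign_sum_window h0 (T + 6 * j) 0
  simp only [hx0, level_zero, zero_add] at hsign
  rw [← hsign, show T + 6 * j + 1 = T + 1 + 2 * (3 * j) by ring]
  exact apply_add_two_mul_eq (f := (x · 0 ω)) (fun t ht => hper t (by omega)) (3 * j)
end
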